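/- arXiv:math-ph/9912020 — 5 statements merged into one kernel-verified Lean document; each statement's English description precedes it below -/
import Mathlib

section
/- For every fixed real x > 0, the limit as m → -1 from the right of V_m(x) equals 1/x; equivalently, lim_{m→-1⁺} x · V_m(x) = 1. This justifies the convention V_{-1}(x) = 1/x. -/
open MeasureTheory Real Set Filter Topology

/-! As `m → -1⁺` the normalized weight `uᵐ e⁻ᵘ / Γ(m+1)` on `(0, ∞)` concentrates at `u = 0`:
its first moment is `m + 1`. Since `|1/√(x² + u) - 1/x| ≤ u / (2x³)`, this gives
`|V_m(x) - 1/x| ≤ (m + 1) / (2x³)`. -/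

/-- The one-dimensional regularized Coulomb potential `V_m(x)`. -/
noncomputable def V (m x : ℝ) : ℝ :=
  (1 / Real.Gamma (m + 1)) *
    ∫ u in Set.Ioi (0:ℝ), u ^ m * Real.exp (-u) / Real.sqrt (x ^ 2 + u)

lemma abs_one_div_sqrt_sq_add_sub_le {x u : ℝ} (hx : 0 < x) (hu : 0 ≤ u) :
    |1 / √(x ^ 2 + u) - 1 / x| ≤ u / (2 * x ^ 3) := by
  set s := √(x ^ 2 + u)
  have hxs : x ≤ s := Real.le_sqrt_of_sq_le (by linarith)
  have hs_sq : s ^ 2 = x ^ 2 + u := Real.sq_sqrt (by positivity)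
  have hs : 0 < s := hx.trans_le hxs
  have hdiff : 1 / x - 1 / s = u / (x * s * (s + x)) := by
    field_simp
    nlinarith
  rw [abs_sub_comm, abs_of_nonneg (by rw [hdiff]; positivity), hdiff]
  calc u / (x * s * (s + x)) ≤ u / (x * x * (x + x)) := by gcongr
    _ = u / (2 * x ^ 3) := by ring

lemma integrableOn_rpow_mul_exp_neg {s : ℝ} (hs : -1 < s) :
    IntegrableOn (fun u : ℝ => u ^ s * exp (-u)) (Ioi 0) := by
  simpa using integrableOn_rpow_mul_exp_neg_rpow hs one_pos

lemma integral_rpow_mul_exp_neg {s : ℝ} (hs : -1 < s) :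
    ∫ u in Ioi (0 : ℝ), u ^ s * exp (-u) = Gamma (s + 1) := by
  simpa using integral_rpow_mul_exp_neg_mul_Ioi (a := s + 1) (by linarith) one_pos

lemma abs_gamma_average_sub_le {m c K : ℝ} (hm : -1 < m) {f : ℝ → ℝ}
    (hf : AEStronglyMeasurable f (volume.restrict (Ioi 0)))
    (hfc : ∀ u > 0, |f u - c| ≤ K * u) :
    |1 / Gamma (m + 1) * (∫ u in Ioi 0, u ^ m * exp (-u) * f u) - c| ≤ K * (m + 1) := by
  have hm1 : 0 < m + 1 := by linarith
  have hΓ : 0 < Gamma (m + 1) := Gamma_pos_of_pos hm1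
  have hw := integrableOn_rpow_mul_exp_neg hm
  have hw₁ := integrableOn_rpow_mul_exp_neg (s := m + 1) (by linarith)
  have hdev_le : ∀ᵐ u ∂volume.restrict (Ioi 0),
      ‖u ^ m * exp (-u) * (f u - c)‖ ≤ K * (u ^ (m + 1) * exp (-u)) := by
    filter_upwards [self_mem_ae_restrict measurableSet_Ioi] with u (hu : 0 < u)
    rw [norm_mul, Real.norm_of_nonneg (by positivity), Real.norm_eq_abs, rpow_add_one hu.ne']
    calc u ^ m * exp (-u) * |f u - c| ≤ u ^ m * exp (-u) * (K * u) := by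
          gcongr; exact hfc u hu
      _ = K * (u ^ m * u * exp (-u)) := by ring
  have hdev : IntegrableOn (fun u => u ^ m * exp (-u) * (f u - c)) (Ioi 0) :=
    (hw₁.const_mul K).mono'
      (hw.aestronglyMeasurable.mul (hf.sub aestronglyMeasurable_const)) hdev_le
  have hsplit : ∫ u in Ioi 0, u ^ m * exp (-u) * f u
      = (∫ u in Ioi 0, u ^ m * exp (-u) * (f u - c)) + c * Gamma (m + 1) := by
    rw [← integral_rpow_mul_exp_neg hm, ← integral_const_mul, ← integral_add hdev (hw.const_mul c)]
    congr 1 with u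
    ring
  have hnorm := norm_integral_le_of_norm_le (hw₁.const_mul K) hdev_le
  rw [integral_const_mul, integral_rpow_mul_exp_neg (by linarith), Gamma_add_one hm1.ne'] at hnorm
  rw [hsplit, mul_add, one_div_mul_eq_div _ (c * _), mul_div_cancel_right₀ _ hΓ.ne',
    add_sub_cancel_right, abs_mul, abs_of_pos (one_div_pos.2 hΓ), one_div_mul_eq_div,
    div_le_iff₀ hΓ, ← Real.norm_eq_abs]
  linarith

lemma abs_V_sub_one_div_le {x m : ℝ} (hx : 0 < x) (hm : -1 < m) :
    |V m x - 1 / x| ≤ (m + 1) / (2 * x ^ 3) := by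
  have h := abs_gamma_average_sub_le hm (f := fun u => 1 / √(x ^ 2 + u)) (c := 1 / x)
    (K := 1 / (2 * x ^ 3)) (by fun_prop : Measurable _).aestronglyMeasurable fun u hu =>
      (abs_one_div_sqrt_sq_add_sub_le hx hu.le).trans_eq (by ring)
  simpa only [V, mul_one_div, one_div_mul_eq_div] using h

theorem tendsto_V_to_inv (x : ℝ) (hx : 0 < x) :
    Filter.Tendsto (fun m => V m x) (nhdsWithin (-1) (Set.Ioi (-1))) (nhds (1 / x)) ∧
    Filter.Tendsto (fun m => x * V m x) (nhdsWithin (-1) (Set.Ioi (-1))) (nhds 1) := by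
  have hV : Tendsto (fun m => V m x) (𝓝[>] (-1)) (𝓝 (1 / x)) := by
    have hbound : Tendsto (fun m : ℝ => (m + 1) / (2 * x ^ 3)) (𝓝[>] (-1)) (𝓝 0) := by
      have : Tendsto (fun m : ℝ => (m + 1) / (2 * x ^ 3)) (𝓝 (-1)) (𝓝 ((-1 + 1) / (2 * x ^ 3))) :=
        ((continuous_id.add continuous_const).div_const _).tendsto _
      simpa using this.mono_left nhdsWithin_le_nhds
    rw [tendsto_iff_norm_sub_tendsto_zero]
    refine squeeze_zero' (Eventually.of_forall fun m => norm_nonneg _) ?_ hbound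
    filter_upwards [self_mem_nhdsWithin] with m hm using abs_V_sub_one_div_le hx hm
  refine ⟨hV, ?_⟩
  simpa [mul_inv_cancel₀ hx.ne'] using hV.const_mul x
end

section
/- For every fixed real x > 0, the function m ↦ V_m(x) is strictly decreasing on (-1, ∞); in particular, for all m > -1, V_{m+1}(x) < V_m(x) < 1/x. -/
open MeasureTheory Real Set

/-!
`V m x` is the mean of the strictly decreasing function `u ↦ (x² + u)^(-1/2)` under the
Gamma(m + 1) law, whose density on `(0, ∞)` is `gammaDensity m`. For `m₁ < m₂` the ratio of the
two densities is a constant multiple of `u ^ (m₂ - m₁)`, so their difference changes sign exactly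
once, from negative to positive, at some `u₀`. Both densities have mass one, so with `p`, `q`
the densities for `m₁`, `m₂` and `f` the kernel, `V m₂ x - V m₁ x = ∫ (q - p) (f - f u₀) < 0`,
the integrand being negative away from `u₀`. The bound `V m x < 1 / x` comes from
`(x² + u)^(-1/2) < 1 / x` for `u > 0`.
-/

theorem integral_lt_integral_of_ae_lt {α : Type*} [MeasurableSpace α] {μ : Measure α}
    {f g : α → ℝ} (hμ : μ ≠ 0) (hf : Integrable f μ) (hg : Integrable g μ)
    (hfg : ∀ᵐ a ∂μ, f a < g a) : ∫ a, f a ∂μ < ∫ a, g a ∂μ := by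
  have hpos : 0 < ∫ a, (g a - f a) ∂μ := by
    rw [integral_pos_iff_support_of_nonneg_ae
      (hfg.mono fun a h => (sub_pos.2 h).le) (hg.sub hf)]
    refine pos_iff_ne_zero.2 fun hnull =>
      hμ (ae_eq_bot.1 (Filter.eventually_false_iff_eq_bot.1 ?_))
    exact (hfg.and (measure_eq_zero_iff_ae_notMem.1 hnull)).mono
      fun a h => h.2 (sub_pos.2 h.1).ne'
  rw [integral_sub hg hf] at hpos
  linarith

theorem setIntegral_mul_lt_of_single_crossing {μ : Measure ℝ} [NullSingletonClass μ]
    {s : Set ℝ} {p q f : ℝ → ℝ} {u₀ : ℝ} (hs : MeasurableSet s) (hμs : μ s ≠ 0)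
    (hp : IntegrableOn p s μ) (hq : IntegrableOn q s μ)
    (hpf : IntegrableOn (fun u => p u * f u) s μ) (hqf : IntegrableOn (fun u => q u * f u) s μ)
    (hpq : ∫ u in s, p u ∂μ = ∫ u in s, q u ∂μ) (hf : StrictAntiOn f s) (hu₀ : u₀ ∈ s)
    (hbelow : ∀ u ∈ s, u < u₀ → q u < p u) (habove : ∀ u ∈ s, u₀ < u → p u < q u) :
    ∫ u in s, q u * f u ∂μ < ∫ u in s, p u * f u ∂μ := by
  have hneg : ∀ u ∈ s, u ≠ u₀ → (q u - p u) * (f u - f u₀) < 0 := by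
    intro u hu hne
    rcases hne.lt_or_gt with h | h
    · exact mul_neg_of_neg_of_pos (sub_neg.2 (hbelow u hu h)) (sub_pos.2 (hf hu hu₀ h))
    · exact mul_neg_of_pos_of_neg (sub_pos.2 (habove u hu h)) (sub_neg.2 (hf hu₀ hu h))
  have hexpand : (fun u => (q u - p u) * (f u - f u₀))
      = fun u => (q u * f u - p u * f u) - (q u - p u) * f u₀ := by
    ext u; ring
  have hdiff : IntegrableOn (fun u => q u * f u - p u * f u) s μ := hqf.sub hpf
  have hconst : IntegrableOn (fun u => (q u - p u) * f u₀) s μ := (hq.sub hp).mul_const _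
  have hint : IntegrableOn (fun u => (q u - p u) * (f u - f u₀)) s μ := by
    rw [hexpand]; exact hdiff.sub hconst
  have hlt : ∫ u in s, (q u - p u) * (f u - f u₀) ∂μ < ∫ u in s, (0 : ℝ) ∂μ := by
    refine integral_lt_integral_of_ae_lt (by simpa using hμs) hint (integrable_zero _ _ _) ?_
    filter_upwards [ae_restrict_mem hs, Measure.ae_ne _ u₀] with u hu hne
    exact hneg u hu hne
  rw [hexpand, integral_sub hdiff hconst, integral_sub hqf hpf, integral_mul_const,
    integral_sub hq hp, hpq, sub_self, zero_mul, sub_zero, integral_zero] at hlt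
  linarith

noncomputable def gammaDensity (m u : ℝ) : ℝ := u ^ m * exp (-u) / Gamma (m + 1)

section gammaDensity

variable {m m₁ m₂ : ℝ}

theorem gammaDensity_pos (hm : -1 < m) {u : ℝ} (hu : 0 < u) : 0 < gammaDensity m u := by
  have := Gamma_pos_of_pos (by linarith : 0 < m + 1)
  unfold gammaDensity
  positivity

theorem integrableOn_gammaDensity (hm : -1 < m) : IntegrableOn (gammaDensity m) (Ioi 0) := by
  refine ((GammaIntegral_convergent (by linarith : 0 < m + 1)).congr_fun
    (fun u _ => ?_) measurableSet_Ioi).div_const _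
  rw [add_sub_cancel_right, mul_comm]

theorem integral_gammaDensity (hm : -1 < m) : ∫ u in Ioi 0, gammaDensity m u = 1 := by
  have hΓ := Gamma_pos_of_pos (by linarith : 0 < m + 1)
  simp only [gammaDensity, integral_div]
  rw [div_eq_one_iff_eq hΓ.ne', Gamma_eq_integral (by linarith)]
  refine setIntegral_congr_fun measurableSet_Ioi fun u _ => ?_
  rw [add_sub_cancel_right, mul_comm]

theorem gammaDensity_eq_mul_rpow (hm₁ : -1 < m₁) {u : ℝ} (hu : 0 < u) :
    gammaDensity m₂ u =
      gammaDensity m₁ u * (u ^ (m₂ - m₁) * Gamma (m₁ + 1) / Gamma (m₂ + 1)) := by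
  have hΓ := Gamma_pos_of_pos (by linarith : 0 < m₁ + 1)
  rw [gammaDensity, gammaDensity, show u ^ m₂ = u ^ m₁ * u ^ (m₂ - m₁) by
    rw [← rpow_add hu, add_sub_cancel]]
  field_simp

theorem exists_single_crossing_gammaDensity (hm₁ : -1 < m₁) (h : m₁ < m₂) :
    ∃ u₀ > 0, ∀ u > 0, (u < u₀ → gammaDensity m₂ u < gammaDensity m₁ u) ∧
      (u₀ < u → gammaDensity m₁ u < gammaDensity m₂ u) := by
  have hΓ₁ := Gamma_pos_of_pos (by linarith : 0 < m₁ + 1)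
  have hΓ₂ := Gamma_pos_of_pos (by linarith : 0 < m₂ + 1)
  have hd : 0 < m₂ - m₁ := sub_pos.2 h
  have hc : 0 < Gamma (m₂ + 1) / Gamma (m₁ + 1) := div_pos hΓ₂ hΓ₁
  refine ⟨(Gamma (m₂ + 1) / Gamma (m₁ + 1)) ^ (m₂ - m₁)⁻¹, rpow_pos_of_pos hc _,
    fun u hu => ⟨fun hlt => ?_, fun hgt => ?_⟩⟩
  · rw [lt_rpow_inv_iff_of_pos hu.le hc.le hd, lt_div_iff₀ hΓ₁] at hlt
    rwa [gammaDensity_eq_mul_rpow hm₁ hu, mul_lt_iff_lt_one_right (gammaDensity_pos hm₁ hu),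
      div_lt_one hΓ₂]
  · rw [rpow_inv_lt_iff_of_pos hc.le hu.le hd, div_lt_iff₀ hΓ₁] at hgt
    rwa [gammaDensity_eq_mul_rpow (m₂ := m₂) hm₁ hu,
      lt_mul_iff_one_lt_right (gammaDensity_pos hm₁ hu), one_lt_div hΓ₂]

end gammaDensity

theorem strictAntiOn_inv_sqrt_sq_add (x : ℝ) :
    StrictAntiOn (fun u : ℝ => (√(x ^ 2 + u))⁻¹) (Ioi 0) := fun u hu _ _ huv =>
  have hu : 0 < u := hu
  inv_strictAnti₀ (sqrt_pos.2 (by positivity)) (sqrt_lt_sqrt (by positivity) (by linarith))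

theorem inv_sqrt_sq_add_lt_inv {x u : ℝ} (hx : 0 < x) (hu : 0 < u) : (√(x ^ 2 + u))⁻¹ < x⁻¹ := by
  refine inv_strictAnti₀ hx ?_
  calc x = √(x ^ 2) := (sqrt_sq hx.le).symm
    _ < √(x ^ 2 + u) := sqrt_lt_sqrt (sq_nonneg x) (by linarith)

theorem integrableOn_gammaDensity_mul_inv_sqrt {m x : ℝ} (hm : -1 < m) (hx : 0 < x) :
    IntegrableOn (fun u => gammaDensity m u * (√(x ^ 2 + u))⁻¹) (Ioi 0) := by
  refine (integrableOn_gammaDensity hm).mul_bdd (c := x⁻¹) (by fun_prop) ?_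
  filter_upwards [ae_restrict_mem measurableSet_Ioi] with u hu
  rw [norm_inv, norm_of_nonneg (sqrt_nonneg _)]
  exact (inv_sqrt_sq_add_lt_inv hx hu).le

theorem V_eq_integral_gammaDensity (m x : ℝ) :
    V m x = ∫ u in Ioi 0, gammaDensity m u * (√(x ^ 2 + u))⁻¹ := by
  rw [V, ← integral_const_mul]
  congr 1 with u
  simp only [gammaDensity]
  ring

theorem V_lt_one_div {m x : ℝ} (hm : -1 < m) (hx : 0 < x) : V m x < 1 / x := by
  rw [V_eq_integral_gammaDensity]
  calc ∫ u in Ioi 0, gammaDensity m u * (√(x ^ 2 + u))⁻¹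
      < ∫ u in Ioi 0, gammaDensity m u * x⁻¹ := by
        refine integral_lt_integral_of_ae_lt (by simp)
          (integrableOn_gammaDensity_mul_inv_sqrt hm hx)
          ((integrableOn_gammaDensity hm).mul_const _) ?_
        filter_upwards [ae_restrict_mem measurableSet_Ioi] with u hu
        exact mul_lt_mul_of_pos_left (inv_sqrt_sq_add_lt_inv hx hu) (gammaDensity_pos hm hu)
    _ = 1 / x := by rw [integral_mul_const, integral_gammaDensity hm, one_mul, one_div]

theorem V_lt_V_of_lt {m₁ m₂ x : ℝ} (hm₁ : -1 < m₁) (h : m₁ < m₂) (hx : 0 < x) :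
    V m₂ x < V m₁ x := by
  have hm₂ : -1 < m₂ := hm₁.trans h
  obtain ⟨u₀, hu₀, hcross⟩ := exists_single_crossing_gammaDensity hm₁ h
  rw [V_eq_integral_gammaDensity, V_eq_integral_gammaDensity]
  exact setIntegral_mul_lt_of_single_crossing measurableSet_Ioi (by simp)
    (integrableOn_gammaDensity hm₁) (integrableOn_gammaDensity hm₂)
    (integrableOn_gammaDensity_mul_inv_sqrt hm₁ hx) (integrableOn_gammaDensity_mul_inv_sqrt hm₂ hx)
    (by rw [integral_gammaDensity hm₁, integral_gammaDensity hm₂])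
    (strictAntiOn_inv_sqrt_sq_add x) hu₀
    (fun u hu => (hcross u hu).1) (fun u hu => (hcross u hu).2)

theorem V_strictAnti_in_m (x : ℝ) (hx : 0 < x) :
    StrictAntiOn (fun m => V m x) (Set.Ioi (-1)) ∧
    ∀ m : ℝ, -1 < m → V (m + 1) x < V m x ∧ V m x < 1 / x :=
  ⟨fun _ hm₁ _ _ h => V_lt_V_of_lt hm₁ h hx,
    fun m hm => ⟨V_lt_V_of_lt hm (lt_add_one m) hx, V_lt_one_div hm hx⟩⟩
end

section
/- The function x ↦ V_0(x) is convex on (0, ∞). -/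
/-!
Substituting `u = t ^ 2 + 2 x t` (so that `√(x ^ 2 + u) = x + t` and `du = 2 (x + t) dt`) gives
`V₀(x) = ∫₀^∞ 2 exp (-(t ^ 2 + 2 x t)) dt`. For each fixed `t` the integrand is the exponential of
an affine function of `x`, hence convex in `x`, and an integral of convex functions is convex.
-/

open MeasureTheory Real Set

/-- The `m = 0` one-dimensional regularized Coulomb potential `V_0(x)`. -/
noncomputable def V0 (x : ℝ) : ℝ :=
  ∫ u in Set.Ioi (0:ℝ), Real.exp (-u) / Real.sqrt (x ^ 2 + u)

open Filter

theorem convexOn_integral {α E : Type*} [MeasurableSpace α] {μ : Measure α}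
    [AddCommGroup E] [Module ℝ E] {s : Set E} {f : E → α → ℝ} (hs : Convex ℝ s)
    (hf : ∀ᵐ t ∂μ, ConvexOn ℝ s (f · t)) (hint : ∀ x ∈ s, Integrable (f x) μ) :
    ConvexOn ℝ s fun x => ∫ t, f x t ∂μ := by
  refine ⟨hs, fun x hx y hy a b ha hb hab => ?_⟩
  have hcomb : Integrable (fun t => a * f x t + b * f y t) μ :=
    ((hint x hx).const_mul a).add ((hint y hy).const_mul b)
  calc ∫ t, f (a • x + b • y) t ∂μ ≤ ∫ t, a * f x t + b * f y t ∂μ :=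
        integral_mono_ae (hint _ (hs hx hy ha hb hab)) hcomb <| by
          filter_upwards [hf] with t ht using ht.2 hx hy ha hb hab
    _ = a • ∫ t, f x t ∂μ + b • ∫ t, f y t ∂μ := by
        rw [integral_add ((hint x hx).const_mul a) ((hint y hy).const_mul b),
          integral_const_mul, integral_const_mul, smul_eq_mul, smul_eq_mul]

theorem integral_comp_sq_add_mul_Ioi {E : Type*} [NormedAddCommGroup E] [NormedSpace ℝ E]
    (g : ℝ → E) {x : ℝ} (hx : 0 ≤ x) :
    ∫ t in Ioi 0, (2 * t + 2 * x) • g (t ^ 2 + 2 * x * t) = ∫ u in Ioi 0, g u := by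
  set f : ℝ → ℝ := fun t => t ^ 2 + 2 * x * t
  have hmono : StrictMonoOn f (Ici 0) := fun a ha b hb hab => by
    simp only [mem_Ici, f] at ha hb ⊢; nlinarith
  have htop : Tendsto f atTop atTop :=
    tendsto_atTop_mono' _ (eventually_ge_atTop 0 |>.mono fun t ht => by
      simp only [f]; nlinarith) (tendsto_pow_atTop two_ne_zero)
  have himage : f '' Ioi 0 = Ioi 0 := by
    simpa [f] using (by fun_prop : Continuous f).continuousOn.image_Ioi_of_strictMonoOn hmono htop
  have hderiv : ∀ t ∈ Ioi (0 : ℝ), HasDerivWithinAt f (2 * t + 2 * x) (Ioi 0) t := fun t _ =>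
    (((hasDerivAt_pow 2 t).add ((hasDerivAt_id' t).const_mul (2 * x))).congr_deriv
      (by ring)).hasDerivWithinAt
  conv_rhs => rw [← himage]
  rw [integral_image_eq_integral_abs_deriv_smul measurableSet_Ioi hderiv
    (hmono.injOn.mono Ioi_subset_Ici_self)]
  refine setIntegral_congr_fun measurableSet_Ioi fun t ht => ?_
  rw [abs_of_pos (by simp only [mem_Ioi] at ht; positivity)]

theorem V0_eq_integral_exp {x : ℝ} (hx : 0 ≤ x) :
    V0 x = ∫ t in Ioi 0, 2 * exp (-(t ^ 2 + 2 * x * t)) := by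
  rw [V0, ← integral_comp_sq_add_mul_Ioi _ hx]
  refine setIntegral_congr_fun measurableSet_Ioi fun t ht => ?_
  have hxt : 0 < x + t := by simp only [mem_Ioi] at ht; linarith
  rw [show x ^ 2 + (t ^ 2 + 2 * x * t) = (x + t) ^ 2 by ring, sqrt_sq hxt.le, smul_eq_mul]
  field_simp
  ring

theorem convexOn_exp_neg_sq_add_mul (t : ℝ) :
    ConvexOn ℝ univ fun x : ℝ => exp (-(t ^ 2 + 2 * x * t)) := by
  refine (convexOn_exp.comp_affineMap (AffineMap.lineMap (-t ^ 2) (-t ^ 2 - 2 * t))).congr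
    fun x _ => ?_
  simp only [Function.comp_apply, AffineMap.lineMap_apply_ring']
  ring_nf

theorem integrableOn_exp_neg_sq_add_mul {x : ℝ} (hx : 0 < x) :
    IntegrableOn (fun t => exp (-(t ^ 2 + 2 * x * t))) (Ioi 0) := by
  refine (exp_neg_integrableOn_Ioi 0 (by positivity : 0 < 2 * x)).mono' (by fun_prop) ?_
  filter_upwards [ae_restrict_mem measurableSet_Ioi] with t ht
  rw [norm_of_nonneg (exp_pos _).le, exp_le_exp]
  nlinarith [mem_Ioi.mp ht]

theorem V0_convex : ConvexOn ℝ (Set.Ioi 0) V0 := by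
  refine (convexOn_integral (convex_Ioi 0) (Eventually.of_forall fun t => ?_) fun x hx => ?_).congr
    fun x hx => (V0_eq_integral_exp (le_of_lt hx)).symm
  · exact ((convexOn_exp_neg_sq_add_mul t).subset (subset_univ _) (convex_Ioi 0)).smul two_pos.le
  · exact (integrableOn_exp_neg_sq_add_mul hx).const_mul 2
end

section
/- For every real x > 0, g_π(x) ≤ V_0(x) < g_4(x), where g_k(x) = k / ((k−1) x + √(x² + k)). -/
open MeasureTheory Real Set

/-- The comparison function `g_k(x) = k / ((k-1)x + √(x² + k))`. -/
noncomputable def g (k x : ℝ) : ℝ := k / ((k - 1) * x + Real.sqrt (x ^ 2 + k))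

/-!
The substitution `u = t² - x²` gives `V₀(x) = 2 e^{x²} ∫ₓ^∞ e^{-t²} dt`, hence
`V₀(x) - g_k(x) = e^{x²} ψ_k(x)` with `ψ_k(y) = 2 ∫_y^∞ e^{-t²} dt - e^{-y²} g_k(y)`,
and `ψ_k → 0` at infinity. A direct computation shows that `ψ_k'(y)` is a positive multiple
of `(k - 3) √(y² + k) - y`. For `k = 4` this is positive, so `ψ₄` increases to `0` and is
negative. For `k = π` it is decreasing in `y` (as `0 ≤ π - 3 ≤ 1`) and changes sign once, so
`ψ_π` increases from `ψ_π(0) = 0` and then decreases to `0`; hence `ψ_π ≥ 0`.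
-/

open Filter Topology

lemma antitone_mul_sqrt_sq_add_sub {a k : ℝ} (ha₀ : 0 ≤ a) (ha₁ : a ≤ 1) (hk : 0 < k) :
    Antitone fun y => a * √(y ^ 2 + k) - y := by
  refine antitone_of_hasDerivAt_nonpos (f' := fun y => a * (2 * y / (2 * √(y ^ 2 + k))) - 1)
    (fun y => ?_) fun y => ?_
  · have hsqrt := ((hasDerivAt_pow 2 y).add_const k).sqrt (by positivity : y ^ 2 + k ≠ 0)
    simpa using (hsqrt.const_mul a).fun_sub (hasDerivAt_id y)
  · have hs : |y| < √(y ^ 2 + k) := by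
      rw [← Real.sqrt_sq_eq_abs]; exact Real.sqrt_lt_sqrt (sq_nonneg y) (by linarith)
    have : 2 * y / (2 * √(y ^ 2 + k)) ≤ 1 := by
      rw [div_le_one (by positivity)]; linarith [le_abs_self y]
    simp only [Pi.zero_apply]
    nlinarith

lemma AntitoneOn.le_of_tendsto_atTop {α β : Type*} [SemilatticeSup α] [Nonempty α]
    [TopologicalSpace β] [Preorder β] [ClosedIicTopology β] {f : α → β} {a : α} {L : β}
    (hf : AntitoneOn f (Ici a)) (hL : Tendsto f atTop (𝓝 L)) : L ≤ f a :=
  le_of_tendsto hL ((eventually_ge_atTop a).mono fun _ hz => hf self_mem_Ici hz hz)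

lemma MonotoneOn.le_of_tendsto_atTop {α β : Type*} [SemilatticeSup α] [Nonempty α]
    [TopologicalSpace β] [Preorder β] [ClosedIciTopology β] {f : α → β} {a : α} {L : β}
    (hf : MonotoneOn f (Ici a)) (hL : Tendsto f atTop (𝓝 L)) : f a ≤ L :=
  ge_of_tendsto hL ((eventually_ge_atTop a).mono fun _ hz => hf self_mem_Ici hz hz)

noncomputable def gaussTail (x : ℝ) : ℝ := ∫ t in Ioi x, exp (-t ^ 2)

lemma integrable_exp_neg_sq : Integrable fun t : ℝ => exp (-t ^ 2) := by
  simpa using integrable_exp_neg_mul_sq one_pos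

lemma gaussTail_zero : gaussTail 0 = √π / 2 := by
  simpa [gaussTail] using integral_gaussian_Ioi 1

lemma hasDerivAt_gaussTail (x : ℝ) : HasDerivAt gaussTail (-exp (-x ^ 2)) x := by
  have h : gaussTail = fun y => gaussTail 0 - ∫ t in (0 : ℝ)..y, exp (-t ^ 2) := by
    funext y
    exact eq_sub_of_add_eq' (intervalIntegral.integral_interval_add_Ioi
      integrable_exp_neg_sq.integrableOn integrable_exp_neg_sq.integrableOn)
  rw [h]
  exact ((by fun_prop : Continuous fun t : ℝ => exp (-t ^ 2)).integral_hasStrictDerivAt 0 x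
    |>.hasDerivAt).const_sub _

lemma tendsto_gaussTail_atTop : Tendsto gaussTail atTop (𝓝 0) :=
  tendsto_integral_Ioi_zero tendsto_id

lemma V0_eq_gaussTail {x : ℝ} (hx : 0 ≤ x) : V0 x = 2 * exp (x ^ 2) * gaussTail x := by
  set φ : ℝ → ℝ := fun t => t ^ 2 - x ^ 2
  have hφ_mono : StrictMonoOn φ (Ioi x) := fun a ha b hb hab => by
    have : 0 < a := hx.trans_lt ha
    simp only [φ]; nlinarith
  have hφ_image : φ '' Ioi x = Ioi 0 := by
    ext u
    constructor
    · rintro ⟨t, ht, rfl⟩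
      have : 0 < t := hx.trans_lt ht
      simp only [φ, mem_Ioi] at ht ⊢; nlinarith
    · intro hu
      rw [mem_Ioi] at hu
      have hxu : 0 ≤ x ^ 2 + u := by positivity
      refine ⟨√(x ^ 2 + u), ?_, by simp [φ, Real.sq_sqrt hxu]⟩
      rw [mem_Ioi, Real.lt_sqrt hx]; linarith
  have hφ_deriv (t : ℝ) (_ : t ∈ Ioi x) : HasDerivWithinAt φ (2 * t) (Ioi x) t := by
    have : HasDerivAt φ (2 * t) t := by
      simpa [φ] using (hasDerivAt_pow 2 t).sub_const (x ^ 2)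
    exact this.hasDerivWithinAt
  have hsubst := integral_image_eq_integral_abs_deriv_smul measurableSet_Ioi hφ_deriv
    hφ_mono.injOn (fun u => exp (-u) / √(x ^ 2 + u))
  rw [hφ_image] at hsubst
  rw [V0, hsubst, gaussTail, ← integral_const_mul]
  refine setIntegral_congr_fun measurableSet_Ioi fun t ht => ?_
  have ht0 : 0 < t := hx.trans_lt ht
  rw [show x ^ 2 + φ t = t ^ 2 by ring, Real.sqrt_sq ht0.le, abs_of_pos (by positivity),
    show -φ t = x ^ 2 + -t ^ 2 by ring, exp_add, smul_eq_mul]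
  field_simp

noncomputable def psi (k y : ℝ) : ℝ := 2 * gaussTail y - exp (-y ^ 2) * g k y

lemma V0_sub_g_eq (k : ℝ) {x : ℝ} (hx : 0 ≤ x) : V0 x - g k x = exp (x ^ 2) * psi k x := by
  have h : exp (x ^ 2) * exp (-x ^ 2) = 1 := by rw [← exp_add, add_neg_cancel, exp_zero]
  rw [V0_eq_gaussTail hx, psi]
  linear_combination g k x * h

lemma tendsto_g_atTop {k : ℝ} (hk : 1 ≤ k) : Tendsto (g k) atTop (𝓝 0) := by
  refine tendsto_const_nhds.div_atTop (tendsto_atTop_mono' atTop ?_ tendsto_id)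
  filter_upwards [eventually_ge_atTop 0] with y hy
  have : y ≤ √(y ^ 2 + k) := Real.le_sqrt_of_sq_le (by linarith)
  have : 0 ≤ (k - 1) * y := by nlinarith
  simp only [id]; linarith

lemma tendsto_psi_atTop {k : ℝ} (hk : 1 ≤ k) : Tendsto (psi k) atTop (𝓝 0) := by
  have hexp : Tendsto (fun y : ℝ => exp (-y ^ 2)) atTop (𝓝 0) :=
    tendsto_exp_atBot.comp (tendsto_neg_atTop_atBot.comp (tendsto_pow_atTop two_ne_zero))
  show Tendsto (fun y => 2 * gaussTail y - exp (-y ^ 2) * g k y) atTop (𝓝 0)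
  simpa using (tendsto_gaussTail_atTop.const_mul 2).sub (hexp.mul (tendsto_g_atTop hk))

lemma psi_deriv_numerator_identity {k y s d : ℝ} (hs : s ^ 2 = y ^ 2 + k)
    (hd : d = (k - 1) * y + s) :
    (-2 * d ^ 2 * s + 2 * k * y * d * s + k * ((k - 1) * s + y)) * (s + y) ^ 2 =
      k ^ 2 * ((k - 3) * s - y) := by
  subst hd
  linear_combination (-2 * s ^ 3 + 2 * y ^ 2 * s - 3 * k * s - k * y - 2 * k * y * s ^ 2
    - 2 * k * y ^ 2 * s + k ^ 2 * s) * hs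

lemma hasDerivAt_psi {k y : ℝ} (hk : 1 ≤ k) (hy : 0 ≤ y) :
    ∃ c > 0, HasDerivAt (psi k) (c * ((k - 3) * √(y ^ 2 + k) - y)) y := by
  have hk0 : 0 < y ^ 2 + k := by positivity
  have hs0 : 0 < √(y ^ 2 + k) := Real.sqrt_pos.2 hk0
  have hd : 0 < (k - 1) * y + √(y ^ 2 + k) := by nlinarith
  have hden : HasDerivAt (fun z => (k - 1) * z + √(z ^ 2 + k))
      ((k - 1) + 2 * y / (2 * √(y ^ 2 + k))) y := by
    have hsqrt := ((hasDerivAt_pow 2 y).add_const k).sqrt hk0.ne'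
    simpa using ((hasDerivAt_id y).const_mul (k - 1)).fun_add hsqrt
  have hg : HasDerivAt (g k) ((0 * ((k - 1) * y + √(y ^ 2 + k)) -
      k * ((k - 1) + 2 * y / (2 * √(y ^ 2 + k)))) / ((k - 1) * y + √(y ^ 2 + k)) ^ 2) y :=
    (hasDerivAt_const y k).div hden hd.ne'
  have hexp : HasDerivAt (fun z => exp (-z ^ 2)) (exp (-y ^ 2) * -(2 * y)) y := by
    simpa using ((hasDerivAt_pow 2 y).neg).exp
  refine ⟨exp (-y ^ 2) * k ^ 2 /
    (((k - 1) * y + √(y ^ 2 + k)) ^ 2 * √(y ^ 2 + k) * (√(y ^ 2 + k) + y) ^ 2),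
    by positivity, ?_⟩
  refine (((hasDerivAt_gaussTail y).const_mul 2).fun_sub (hexp.fun_mul hg)).congr_deriv ?_
  have hs2 : √(y ^ 2 + k) ^ 2 = y ^ 2 + k := Real.sq_sqrt hk0.le
  unfold g
  set s := √(y ^ 2 + k)
  set d := (k - 1) * y + s with hd_def
  field_simp
  linear_combination psi_deriv_numerator_identity hs2 hd_def

section Monotonicity

variable {k : ℝ} {D : Set ℝ}

lemma differentiableOn_psi (hk : 1 ≤ k) (hD : D ⊆ Ici 0) : DifferentiableOn ℝ (psi k) D :=
  fun _ hy => (hasDerivAt_psi hk (hD hy)).choose_spec.2.differentiableAt.differentiableWithinAt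

lemma monotoneOn_psi (hk : 1 ≤ k) (hD : Convex ℝ D) (hD0 : D ⊆ Ici 0)
    (hsign : ∀ y ∈ D, y ≤ (k - 3) * √(y ^ 2 + k)) : MonotoneOn (psi k) D := by
  refine monotoneOn_of_deriv_nonneg hD (differentiableOn_psi hk hD0).continuousOn
    (differentiableOn_psi hk (interior_subset.trans hD0)) fun y hy => ?_
  obtain ⟨c, hc, hderiv⟩ := hasDerivAt_psi hk (hD0 (interior_subset hy))
  rw [hderiv.deriv]
  exact mul_nonneg hc.le (sub_nonneg.2 (hsign y (interior_subset hy)))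

lemma antitoneOn_psi (hk : 1 ≤ k) (hD : Convex ℝ D) (hD0 : D ⊆ Ici 0)
    (hsign : ∀ y ∈ D, (k - 3) * √(y ^ 2 + k) ≤ y) : AntitoneOn (psi k) D := by
  refine antitoneOn_of_deriv_nonpos hD (differentiableOn_psi hk hD0).continuousOn
    (differentiableOn_psi hk (interior_subset.trans hD0)) fun y hy => ?_
  obtain ⟨c, hc, hderiv⟩ := hasDerivAt_psi hk (hD0 (interior_subset hy))
  rw [hderiv.deriv]
  exact mul_nonpos_of_nonneg_of_nonpos hc.le (sub_nonpos.2 (hsign y (interior_subset hy)))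

lemma strictMonoOn_psi (hk : 1 ≤ k) (hD : Convex ℝ D) (hD0 : D ⊆ Ici 0)
    (hsign : ∀ y ∈ D, y < (k - 3) * √(y ^ 2 + k)) : StrictMonoOn (psi k) D := by
  refine strictMonoOn_of_deriv_pos hD (differentiableOn_psi hk hD0).continuousOn fun y hy => ?_
  obtain ⟨c, hc, hderiv⟩ := hasDerivAt_psi hk (hD0 (interior_subset hy))
  rw [hderiv.deriv]
  exact mul_pos hc (sub_pos.2 (hsign y (interior_subset hy)))

end Monotonicity

lemma psi_pi_zero : psi π 0 = 0 := by
  have h : π / √π = √π := by rw [div_eq_iff (by positivity), Real.mul_self_sqrt pi_pos.le]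
  rw [psi, gaussTail_zero, g]
  norm_num [h]
  ring

lemma psi_pi_nonneg {x : ℝ} (hx : 0 ≤ x) : 0 ≤ psi π x := by
  have hπ : 1 ≤ π := by linarith [pi_gt_three]
  have hc : Antitone fun y => (π - 3) * √(y ^ 2 + π) - y :=
    antitone_mul_sqrt_sq_add_sub (by linarith [pi_gt_three]) (by linarith [pi_lt_four]) pi_pos
  rcases le_total 0 ((π - 3) * √(x ^ 2 + π) - x) with hcx | hcx
  · have hmono := monotoneOn_psi hπ (convex_Icc 0 x) Icc_subset_Ici_self
      fun y hy => sub_nonneg.1 (hcx.trans (hc hy.2))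
    simpa [psi_pi_zero] using hmono (left_mem_Icc.2 hx) (right_mem_Icc.2 hx) hx
  · have hanti := antitoneOn_psi hπ (convex_Ici x) (Ici_subset_Ici.2 hx)
      fun y hy => sub_nonpos.1 ((hc hy).trans hcx)
    exact hanti.le_of_tendsto_atTop (tendsto_psi_atTop hπ)

lemma psi_four_neg {x : ℝ} (hx : 0 ≤ x) : psi 4 x < 0 := by
  have hmono : StrictMonoOn (psi 4) (Ici x) :=
    strictMonoOn_psi (by norm_num) (convex_Ici x) (Ici_subset_Ici.2 hx) fun y hy => by
      rw [show (4 : ℝ) - 3 = 1 by norm_num, one_mul, Real.lt_sqrt (hx.trans hy)]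
      linarith
  calc psi 4 x < psi 4 (x + 1) := hmono self_mem_Ici (by simp) (by linarith)
    _ ≤ 0 := (hmono.monotoneOn.mono (Ici_subset_Ici.2 (by linarith))).le_of_tendsto_atTop
        (tendsto_psi_atTop (by norm_num))

theorem V0_g_bounds (x : ℝ) (hx : 0 < x) :
    g Real.pi x ≤ V0 x ∧ V0 x < g 4 x := by
  have hπ := V0_sub_g_eq π hx.le
  have h4 := V0_sub_g_eq 4 hx.le
  constructor
  · linarith [mul_nonneg (exp_pos (x ^ 2)).le (psi_pi_nonneg hx.le)]
  · linarith [mul_neg_of_pos_of_neg (exp_pos (x ^ 2)) (psi_four_neg hx.le)]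
end

section
/- For every real m ≥ 1 and every real x > 0, V_m satisfies the recursion V_m(x) = (1/m) [ (m − 1/2 − x²) V_{m−1}(x) + x² V_{m−2}(x) ], where for m − 2 = −1 one interprets V_{−1}(x) = 1/x. Consequently, for every positive integer m and x > 0, V_m(x) = (1/(2m)) [ (1 − 2x²) V_{m−1}(x) + Σ_{k=0}^{m−2} V_k(x) + 2x ]. -/
open MeasureTheory Real Set Finset

/-- `V_m(x)` extended by the convention `V_{-1}(x) = 1/x`. -/
noncomputable def Vext (m x : ℝ) : ℝ := if m = -1 then 1 / x else V m x

/-!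
Integrating by parts against `F(u) = uᵃ e⁻ᵘ √(x² + u)`, which vanishes at `∞` and tends to
`0ᵃ x` at `0`, gives a three-term recursion for the unnormalised integrals
`I_c(x) = ∫₀^∞ uᶜ e⁻ᵘ / √(x² + u) du`; dividing by `Γ` yields the recursion for `V_m`.
For integer `n`, the recursion says that `2x² V_{n-1}(x) + 2n V_n(x)` grows by `V_n(x)` from
`n` to `n + 1`, starting from `2x` at `n = 0`; this telescopes to the closed formula.
-/

open Filter Topology

noncomputable def potentialIntegrand (c x u : ℝ) : ℝ := u ^ c * exp (-u) / √(x ^ 2 + u)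

noncomputable def potentialIntegral (c x : ℝ) : ℝ := ∫ u in Ioi 0, potentialIntegrand c x u

variable {a c m x : ℝ}

lemma integrableOn_potentialIntegrand (hc : -1 < c) (hx : 0 < x) :
    IntegrableOn (potentialIntegrand c x) (Ioi 0) := by
  have hGamma : IntegrableOn (fun u : ℝ => exp (-u) * u ^ c) (Ioi 0) := by
    simpa using GammaIntegral_convergent (show 0 < c + 1 by linarith)
  refine (hGamma.const_mul x⁻¹).mono' ?_ ?_
  · refine ContinuousOn.aestronglyMeasurable (fun u (hu : 0 < u) => ?_) measurableSet_Ioi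
    have : 0 < x ^ 2 + u := by positivity
    exact (((continuousAt_rpow_const u c (.inl hu.ne')).mul (by fun_prop)).div (by fun_prop)
      (sqrt_pos.2 this).ne').continuousWithinAt
  · filter_upwards [ae_restrict_mem measurableSet_Ioi] with u (hu : 0 < u)
    have hx_le : x ≤ √(x ^ 2 + u) := le_sqrt_of_sq_le (by linarith)
    rw [norm_of_nonneg (by unfold potentialIntegrand; positivity), potentialIntegrand,
      mul_comm (exp _), inv_mul_eq_div]
    gcongr

lemma hasDerivAt_rpow_mul_exp_neg_mul_sqrt {u : ℝ} (hu : 0 < u) :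
    HasDerivAt (fun t => t ^ a * exp (-t) * √(x ^ 2 + t))
      (a * x ^ 2 * potentialIntegrand (a - 1) x u + (a + 1 / 2 - x ^ 2) * potentialIntegrand a x u
        - potentialIntegrand (a + 1) x u) u := by
  have hpos : 0 < x ^ 2 + u := by positivity
  have hsqrt : HasDerivAt (fun t => √(x ^ 2 + t)) (1 / (2 * √(x ^ 2 + u))) u := by
    simpa using ((hasDerivAt_id u).const_add (x ^ 2)).sqrt hpos.ne'
  refine (((hasDerivAt_rpow_const (.inl hu.ne')).mul (hasDerivAt_neg u).exp).mul
    hsqrt).congr_deriv ?_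
  have hs : √(x ^ 2 + u) ≠ 0 := (sqrt_pos.2 hpos).ne'
  have hs2 : √(x ^ 2 + u) * √(x ^ 2 + u) = x ^ 2 + u := mul_self_sqrt hpos.le
  have hpow_sub : u ^ (a - 1) * u = u ^ a := by rw [← rpow_add_one hu.ne']; norm_num
  simp only [Pi.mul_apply, potentialIntegrand]
  rw [rpow_add_one hu.ne', ← hpow_sub]
  field_simp
  linear_combination (2 * a - 2 * u) * hs2

lemma tendsto_rpow_mul_exp_neg_mul_sqrt_atTop :
    Tendsto (fun t => t ^ a * exp (-t) * √(x ^ 2 + t)) atTop (𝓝 0) := by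
  have hpow : Tendsto (fun t : ℝ => t ^ a * exp (-(1 / 2) * t)) atTop (𝓝 0) :=
    tendsto_rpow_mul_exp_neg_mul_atTop_nhds_zero a (1 / 2) (by norm_num)
  have hsqrt : Tendsto (fun t : ℝ => (x ^ 2 + t) ^ (1 / 2 : ℝ) * exp (-(1 / 2) * (x ^ 2 + t)))
      atTop (𝓝 0) :=
    (tendsto_rpow_mul_exp_neg_mul_atTop_nhds_zero _ _ (by norm_num)).comp
      (tendsto_atTop_add_const_left _ _ tendsto_id)
  have h := hpow.mul (hsqrt.const_mul (exp (1 / 2 * x ^ 2)))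
  rw [mul_zero, zero_mul] at h
  refine h.congr fun t => ?_
  have hexp : exp (-(1 / 2) * t) * (exp (1 / 2 * x ^ 2) * exp (-(1 / 2) * (x ^ 2 + t)))
      = exp (-t) := by
    rw [← exp_add, ← exp_add]; ring_nf
  rw [sqrt_eq_rpow]
  linear_combination (t ^ a * (x ^ 2 + t) ^ (1 / 2 : ℝ)) * hexp

lemma potentialIntegral_add_one (ha : 0 ≤ a) (hx : 0 < x) :
    potentialIntegral (a + 1) x =
      (a + 1 / 2 - x ^ 2) * potentialIntegral a x + a * x ^ 2 * potentialIntegral (a - 1) x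
        + 0 ^ a * x := by
  have hF0 : ContinuousWithinAt (fun t => t ^ a * exp (-t) * √(x ^ 2 + t)) (Ici 0) 0 :=
    (((continuousAt_rpow_const 0 a (.inr ha)).mul (by fun_prop)).mul
      (by fun_prop)).continuousWithinAt
  have hint (c : ℝ) (hc : -1 < c) := integrableOn_potentialIntegrand hc hx
  -- for `a = 0` the first term vanishes although `I_{-1}` diverges
  have hint₁ : IntegrableOn (fun u => a * x ^ 2 * potentialIntegrand (a - 1) x u) (Ioi 0) := by
    rcases ha.eq_or_lt with rfl | ha
    · simp
    · exact (hint _ (by linarith)).const_mul _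
  have hint₂ : IntegrableOn (fun u => (a + 1 / 2 - x ^ 2) * potentialIntegrand a x u) (Ioi 0) :=
    (hint a (by linarith)).const_mul _
  have hint₁₂ : IntegrableOn (fun u => a * x ^ 2 * potentialIntegrand (a - 1) x u +
      (a + 1 / 2 - x ^ 2) * potentialIntegrand a x u) (Ioi 0) := hint₁.add hint₂
  have hint₃ : IntegrableOn (potentialIntegrand (a + 1) x) (Ioi 0) := hint _ (by linarith)
  have hIBP := integral_Ioi_of_hasDerivAt_of_tendsto hF0
    (fun u hu => hasDerivAt_rpow_mul_exp_neg_mul_sqrt hu) (hint₁₂.sub hint₃)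
    tendsto_rpow_mul_exp_neg_mul_sqrt_atTop
  rw [integral_sub hint₁₂ hint₃, integral_add hint₁ hint₂,
    integral_const_mul, integral_const_mul] at hIBP
  rw [neg_zero, exp_zero, mul_one, add_zero, sqrt_sq hx.le] at hIBP
  unfold potentialIntegral
  linear_combination -hIBP

lemma Gamma_add_one_mul_V (hc : -1 < c) :
    Gamma (c + 1) * V c x = potentialIntegral c x := by
  have : Gamma (c + 1) ≠ 0 := (Gamma_pos_of_pos (by linarith)).ne'
  rw [V]
  field_simp
  rfl

-- `0 ^ (m - 1)` is `1` for `m = 1` and `0` for `m > 1`; it absorbs the convention `V_{-1} = 1/x`.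
lemma Gamma_mul_Vext_sub_two (hm : 1 ≤ m) :
    Gamma m * Vext (m - 2) x = (m - 1) * potentialIntegral (m - 2) x + 0 ^ (m - 1) / x := by
  rcases hm.eq_or_lt with rfl | hm
  · norm_num [Vext]
  · have hVext : Vext (m - 2) x = V (m - 2) x := if_neg (by linarith)
    have hGamma : Gamma m = (m - 1) * Gamma (m - 2 + 1) := by
      rw [show m - 2 + 1 = m - 1 by ring, ← Gamma_add_one (by linarith), sub_add_cancel]
    rw [hVext, hGamma, mul_assoc, Gamma_add_one_mul_V (by linarith), zero_rpow (by linarith)]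
    simp

lemma mul_V_eq (hm : 1 ≤ m) (hx : 0 < x) :
    m * V m x = (m - 1 / 2 - x ^ 2) * V (m - 1) x + x ^ 2 * Vext (m - 2) x := by
  have hrec := potentialIntegral_add_one (a := m - 1) (by linarith) hx
  rw [sub_add_cancel, show m - 1 - 1 = m - 2 by ring] at hrec
  have hVm := Gamma_add_one_mul_V (c := m) (x := x) (by linarith)
  have hVm₁ := Gamma_add_one_mul_V (c := m - 1) (x := x) (by linarith)
  rw [sub_add_cancel] at hVm₁
  rw [Gamma_add_one (by linarith)] at hVm
  have hVext : x ^ 2 * (Gamma m * Vext (m - 2) x) =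
      (m - 1) * x ^ 2 * potentialIntegral (m - 2) x + 0 ^ (m - 1) * x := by
    rw [Gamma_mul_Vext_sub_two hm]; field_simp
  apply mul_left_cancel₀ (Gamma_pos_of_pos (by linarith : 0 < m)).ne'
  linear_combination hVm - (m - 1 / 2 - x ^ 2) * hVm₁ - hVext + hrec

lemma mul_V_natCast_add_one (n : ℕ) (hx : 0 < x) :
    (n + 1) * V (n + 1) x = (n + 1 / 2 - x ^ 2) * V n x + x ^ 2 * Vext (n - 1) x := by
  have h := mul_V_eq (m := n + 1) (by simp) hx
  rwa [add_sub_cancel_right, show (n : ℝ) + 1 - 2 = n - 1 by ring,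
    show (n : ℝ) + 1 - 1 / 2 = n + 1 / 2 by ring] at h

lemma two_mul_sq_mul_Vext_add_two_mul_mul_V (n : ℕ) (hx : 0 < x) :
    2 * x ^ 2 * Vext (n - 1) x + 2 * n * V n x = 2 * x + ∑ k ∈ range n, V k x := by
  induction n with
  | zero =>
    simp only [Vext, CharP.cast_eq_zero, zero_sub, if_true, range_zero, sum_empty]
    field_simp
    ring
  | succ n ih =>
    have hVext : Vext n x = V n x := if_neg (by linarith [n.cast_nonneg (α := ℝ)])
    rw [sum_range_succ, Nat.cast_succ, add_sub_cancel_right, hVext]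
    linear_combination ih + 2 * mul_V_natCast_add_one n hx

theorem V_recursion :
    (∀ m x : ℝ, 1 ≤ m → 0 < x →
      V m x = (1 / m) *
        ((m - 1/2 - x ^ 2) * V (m - 1) x + x ^ 2 * Vext (m - 2) x)) ∧
    ∀ (m : ℕ) (x : ℝ), 1 ≤ m → 0 < x →
      V (m : ℝ) x = (1 / (2 * (m : ℝ))) *
        ((1 - 2 * x ^ 2) * V ((m : ℝ) - 1) x +
          (∑ k ∈ Finset.range (m - 1), V (k : ℝ) x) + 2 * x) := by
  refine ⟨fun m x hm hx => ?_, fun m x hm hx => ?_⟩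
  · rw [← mul_V_eq hm hx]
    field_simp [show m ≠ 0 by linarith]
  · obtain ⟨n, rfl⟩ := Nat.exists_eq_add_of_le' hm
    rw [Nat.add_sub_cancel, Nat.cast_succ, add_sub_cancel_right]
    field_simp
    linear_combination 2 * mul_V_natCast_add_one n hx + two_mul_sq_mul_Vext_add_two_mul_mul_V n hx
end
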